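/- Let b > 0, let m : [0,b] → ℝ be continuously differentiable with m > 0, and let θ : [0,b] → ℝ be continuously differentiable with |θ'(s)| ≤ θ(s) for all s ∈ [0,b], θ(b) = 1, and θ² − θ'² not identically zero on [0,b]. For v : [0,b] → ℝ continuously differentiable with v(0) = 0, v(b) = 1 and 0 ≤ v(s) ≤ v'(s) on [0,b], set K(v) = ( ∫₀ᵇ (v'(s)² − v(s)²) m(s)² ds )^{1/2} / ∫₀ᵇ (θ(s)² − θ'(s)²)^{1/2} (v'(s)² − v(s)²)^{1/2} ds. Then the infimum of K(v) over all such v equals ( ∫₀ᵇ (θ(s)² − θ'(s)²) m(s)⁻² ds )^{−1/2}. -/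

import Mathlib

/-!
Write `H = θ² - θ'²` and `g = v'² - v²`. Weighted Cauchy–Schwarz gives
`∫ √H √g = ∫ (√H / m) (√g m) ≤ (∫ H / m²)^{1/2} (∫ g m²)^{1/2}`, which is the lower bound.
Equality holds when `√g m` is proportional to `√H / m`, i.e. `v'² - v² = c⁻² q²` with
`q = √H / m²`; such a `v` is `w / w(b)` for the solution of `w' = √(w² + q²)`, `w(0) = 0`,
which exists on all of `[0, b]` by Picard–Lindelöf because the field is `1`-Lipschitz in `w`.
-/

open Set MeasureTheory intervalIntegral
open scoped ENNReal NNReal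

theorem intervalIntegral.integral_mul_sq_le_sq_mul_sq {a b : ℝ} (hab : a ≤ b) {f g : ℝ → ℝ}
    (hf : ContinuousOn f (Icc a b)) (hg : ContinuousOn g (Icc a b)) :
    (∫ s in a..b, f s * g s) ^ 2 ≤ (∫ s in a..b, f s ^ 2) * ∫ s in a..b, g s ^ 2 := by
  have hf2 : IntervalIntegrable (fun s => f s ^ 2) volume a b :=
    (hf.pow 2).intervalIntegrable_of_Icc hab
  have hg2 : IntervalIntegrable (fun s => g s ^ 2) volume a b :=
    (hg.pow 2).intervalIntegrable_of_Icc hab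
  have hfg : IntervalIntegrable (fun s => f s * g s) volume a b :=
    (hf.mul hg).intervalIntegrable_of_Icc hab
  have hquad : ∀ x : ℝ, 0 ≤ (∫ s in a..b, g s ^ 2) * (x * x)
      + (2 * ∫ s in a..b, f s * g s) * x + ∫ s in a..b, f s ^ 2 := by
    intro x
    have hexp : ∀ s, (x * g s + f s) ^ 2 = x * x * g s ^ 2 + 2 * x * (f s * g s) + f s ^ 2 :=
      fun s => by ring
    have h := integral_nonneg (μ := volume) hab fun s _ => sq_nonneg (x * g s + f s)
    simp_rw [hexp] at h
    rw [integral_add ((hg2.const_mul _).add (hfg.const_mul _)) hf2,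
      integral_add (hg2.const_mul _) (hfg.const_mul _), integral_const_mul,
      integral_const_mul] at h
    linarith
  have := discrim_le_zero hquad
  rw [discrim] at this
  nlinarith

theorem lipschitzWith_sqrt_sq_add {c : ℝ} (hc : 0 ≤ c) :
    LipschitzWith 1 fun y : ℝ => √(y ^ 2 + c) := by
  refine LipschitzWith.of_le_add fun y z => Real.sqrt_le_iff.2 ⟨by positivity, ?_⟩
  have hz : |z| ≤ √(z ^ 2 + c) := Real.abs_le_sqrt (by linarith)
  rw [Real.dist_eq]
  nlinarith [Real.sq_sqrt (show 0 ≤ z ^ 2 + c by positivity), sq_abs (y - z),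
    mul_le_mul_of_nonneg_right hz (abs_nonneg (y - z)), abs_mul z (y - z),
    le_abs_self (z * (y - z))]

theorem Real.sqrt_sq_add_sq_le (x y : ℝ) : √(x ^ 2 + y ^ 2) ≤ |x| + |y| :=
  Real.sqrt_le_iff.2 ⟨by positivity, by nlinarith [sq_abs x, sq_abs y, abs_nonneg x, abs_nonneg y]⟩

theorem exists_forall_mem_Icc_hasDerivWithinAt_of_norm_le {E : Type*} [NormedAddCommGroup E]
    [NormedSpace ℝ E] [CompleteSpace E] {f : ℝ → E → E} {a b : ℝ} (hab : a ≤ b) {K L : ℝ≥0}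
    (hlip : ∀ t ∈ Icc a b, LipschitzWith K (f t)) (hcont : ∀ x, ContinuousOn (f · x) (Icc a b))
    (hbdd : ∀ t ∈ Icc a b, ∀ x, ‖f t x‖ ≤ L) (x₀ : E) :
    ∃ α : ℝ → E, α a = x₀ ∧ ∀ t ∈ Icc a b, HasDerivWithinAt α (f t (α t)) (Icc a b) t :=
  IsPicardLindelof.exists_eq_forall_mem_Icc_hasDerivWithinAt₀
    (t₀ := ⟨a, left_mem_Icc.2 hab⟩)
    (a := ⟨L * (b - a), by have := sub_nonneg.2 hab; positivity⟩)
    { lipschitzOnWith := fun t ht => (hlip t ht).lipschitzOnWith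
      continuousOn := fun x _ => hcont x
      norm_le := fun t ht x _ => hbdd t ht x
      mul_max_le := by
        simp only [sub_self, sub_nonneg, hab, sup_of_le_left, NNReal.coe_zero, sub_zero]
        exact le_rfl }

theorem exists_hasDerivWithinAt_sqrt_sq_add_sq {a b : ℝ} (hab : a ≤ b) {q : ℝ → ℝ}
    (hq : ContinuousOn q (Icc a b)) :
    ∃ w : ℝ → ℝ, w a = 0 ∧
      ∀ t ∈ Icc a b, HasDerivWithinAt w (√(w t ^ 2 + q t ^ 2)) (Icc a b) t := by
  obtain ⟨Q, hQ⟩ := isCompact_Icc.exists_bound_of_continuousOn hq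
  have hQ0 : 0 ≤ Q := (norm_nonneg _).trans (hQ a (left_mem_Icc.2 hab))
  -- truncating at `M`, above the Grönwall bound `Q (exp (t - a) - 1)`, makes the field bounded
  set M := Q * Real.exp (b - a) + 1
  have hM0 : 0 ≤ M := by positivity
  set f : ℝ → ℝ → ℝ := fun t x => √(min |x| M ^ 2 + q t ^ 2)
  have hf_le : ∀ t x, f t x ≤ min |x| M + |q t| := fun t x => by
    simpa [abs_of_nonneg (le_min (abs_nonneg x) hM0)] using
      Real.sqrt_sq_add_sq_le (min |x| M) (q t)
  obtain ⟨w, hw0, hw⟩ := exists_forall_mem_Icc_hasDerivWithinAt_of_norm_le hab (f := f) (K := 1)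
    (L := ⟨M + Q, by positivity⟩)
    (fun t _ => by
      have := (lipschitzWith_sqrt_sq_add (sq_nonneg (q t))).comp
        ((lipschitzWith_one_norm (E := ℝ)).min_const M)
      rwa [mul_one] at this)
    (fun x => Real.continuous_sqrt.comp_continuousOn (continuousOn_const.add (hq.pow 2)))
    (fun t ht x => by
      rw [Real.norm_of_nonneg (Real.sqrt_nonneg _)]
      exact (hf_le t x).trans
        (add_le_add (min_le_right _ _) ((Real.norm_eq_abs _).symm.trans_le (hQ t ht))))
    0
  have hwM : ∀ t ∈ Icc a b, |w t| < M := by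
    have := norm_le_gronwallBound_of_norm_deriv_right_le (δ := 0) (K := 1) (ε := Q)
      (fun t ht => (hw t ht).continuousWithinAt)
      (fun t ht =>
        (hw t (Ico_subset_Icc_self ht)).mono_of_mem_nhdsWithin (Icc_mem_nhdsGE_of_mem ht))
      (by simp [hw0])
      (fun t ht => by
        rw [Real.norm_of_nonneg (Real.sqrt_nonneg _), one_mul, Real.norm_eq_abs]
        exact (hf_le t (w t)).trans (add_le_add (min_le_left _ _)
          ((Real.norm_eq_abs _).symm.trans_le (hQ t (Ico_subset_Icc_self ht)))))
    intro t ht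
    have hexp : Real.exp (t - a) ≤ Real.exp (b - a) := Real.exp_le_exp.2 (by linarith [ht.2])
    have := this t ht
    rw [gronwallBound_of_K_ne_0 one_ne_zero] at this
    simp only [Real.norm_eq_abs, zero_mul, one_mul, div_one, zero_add] at this
    nlinarith [Real.exp_pos (t - a)]
  refine ⟨w, hw0, fun t ht => ?_⟩
  simpa only [f, min_eq_left (hwM t ht).le, sq_abs] using hw t ht

theorem eqOn_zero_of_hasDerivWithinAt_self {a b : ℝ} {v : ℝ → ℝ}
    (hv : ∀ t ∈ Icc a b, HasDerivWithinAt v (v t) (Icc a b) t) (hva : v a = 0) :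
    EqOn v 0 (Icc a b) :=
  ODE_solution_unique_of_mem_Icc_right (v := fun _ x => x) (s := fun _ => univ) (K := 1)
    (fun _ _ => LipschitzWith.id.lipschitzOnWith) (fun t ht => (hv t ht).continuousWithinAt)
    (fun t ht =>
      (hv t (Ico_subset_Icc_self ht)).mono_of_mem_nhdsWithin (Icc_mem_nhdsGE_of_mem ht))
    (fun _ _ => mem_univ _) continuousOn_const (fun _ _ => hasDerivWithinAt_const _ _ _)
    (fun _ _ => mem_univ _) hva

theorem integral_sqrt_mul_sqrt_le {a b : ℝ} (hab : a ≤ b) {H m g : ℝ → ℝ}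
    (hH : ContinuousOn H (Icc a b)) (hH0 : ∀ s ∈ Icc a b, 0 ≤ H s)
    (hm : ContinuousOn m (Icc a b)) (hm0 : ∀ s ∈ Icc a b, m s ≠ 0)
    (hg : ContinuousOn g (Icc a b)) (hg0 : ∀ s ∈ Icc a b, 0 ≤ g s) :
    ∫ s in a..b, √(H s) * √(g s) ≤
      √(∫ s in a..b, H s * (m s ^ 2)⁻¹) * √(∫ s in a..b, g s * m s ^ 2) := by
  have hcs := integral_mul_sq_le_sq_mul_sq hab (f := fun s => √(H s) / m s)
    (g := fun s => √(g s) * m s) ((Real.continuous_sqrt.comp_continuousOn hH).div hm hm0)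
    ((Real.continuous_sqrt.comp_continuousOn hg).mul hm)
  have hu := uIcc_of_le hab
  have hFG : ∫ s in a..b, √(H s) / m s * (√(g s) * m s) = ∫ s in a..b, √(H s) * √(g s) :=
    integral_congr fun s hs => by rw [hu] at hs; field_simp [hm0 s hs]
  have hF : ∫ s in a..b, (√(H s) / m s) ^ 2 = ∫ s in a..b, H s * (m s ^ 2)⁻¹ :=
    integral_congr fun s hs => by
      rw [hu] at hs; rw [div_pow, Real.sq_sqrt (hH0 s hs), div_eq_mul_inv]
  have hG : ∫ s in a..b, (√(g s) * m s) ^ 2 = ∫ s in a..b, g s * m s ^ 2 :=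
    integral_congr fun s hs => by rw [hu] at hs; simp only [mul_pow, Real.sq_sqrt (hg0 s hs)]
  rw [hFG, hF, hG] at hcs
  rw [← Real.sqrt_mul (integral_nonneg hab fun s hs =>
    mul_nonneg (hH0 s hs) (inv_nonneg.2 (sq_nonneg _)))]
  exact Real.le_sqrt_of_sq_le hcs

theorem ENNReal.ofReal_inv_sqrt_le_div {I N D : ℝ} (hI : 0 < I) (hN : 0 < N)
    (hD : D ≤ √I * √N) : ENNReal.ofReal (√I)⁻¹ ≤ ENNReal.ofReal √N / ENNReal.ofReal D := by
  rcases le_or_gt D 0 with hD0 | hD0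
  · rw [ENNReal.ofReal_of_nonpos hD0,
      ENNReal.div_zero (ENNReal.ofReal_pos.2 (Real.sqrt_pos.2 hN)).ne']
    exact le_top
  · rw [← ENNReal.ofReal_div_of_pos hD0]
    refine ENNReal.ofReal_le_ofReal ?_
    rwa [le_div_iff₀ hD0, inv_mul_le_iff₀ (Real.sqrt_pos.2 hI)]

theorem exists_sq_sub_sq_eq_sq {b : ℝ} (hb : 0 < b) {q : ℝ → ℝ} (hq : ContinuousOn q (Icc 0 b))
    (hqpos : ∃ s ∈ Icc 0 b, 0 < q s) :
    ∃ v v' : ℝ → ℝ, ∃ c : ℝ, 0 < c ∧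
      ((∀ s ∈ Icc 0 b, HasDerivWithinAt v (v' s) (Icc 0 b) s) ∧ ContinuousOn v' (Icc 0 b) ∧
        v 0 = 0 ∧ v b = 1 ∧ ∀ s ∈ Icc 0 b, 0 ≤ v s ∧ v s ≤ v' s) ∧
      ∀ s ∈ Icc 0 b, v' s ^ 2 - v s ^ 2 = (q s / c) ^ 2 := by
  obtain ⟨w, hw0, hw⟩ := exists_hasDerivWithinAt_sqrt_sq_add_sq hb.le hq
  set W := fun t => √(w t ^ 2 + q t ^ 2)
  have hwc : ContinuousOn w (Icc 0 b) := fun t ht => (hw t ht).continuousWithinAt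
  have hWc : ContinuousOn W (Icc 0 b) :=
    Real.continuous_sqrt.comp_continuousOn ((hwc.pow 2).add (hq.pow 2))
  have hwW : ∀ t, w t ≤ W t := fun t =>
    Real.le_sqrt_of_sq_le (le_add_of_nonneg_right (sq_nonneg _))
  have hqW : ∀ t, q t ≤ W t := fun t =>
    Real.le_sqrt_of_sq_le (le_add_of_nonneg_left (sq_nonneg _))
  have hw_nonneg : ∀ t ∈ Icc 0 b, 0 ≤ w t := fun t ht =>
    hw0 ▸ monotoneOn_of_hasDerivWithinAt_nonneg (convex_Icc 0 b) hwc
      (fun s hs => (hw s (interior_subset hs)).mono interior_subset)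
      (fun s _ => Real.sqrt_nonneg _) (left_mem_Icc.2 hb.le) ht ht.1
  have hc : 0 < w b := by
    have hftc := integral_eq_sub_of_hasDerivAt_of_le hb.le hwc
      (fun t ht => (hw t (Ioo_subset_Icc_self ht)).hasDerivAt (Icc_mem_nhds ht.1 ht.2))
      (hWc.intervalIntegrable_of_Icc hb.le)
    obtain ⟨s₀, hs₀, hq₀⟩ := hqpos
    rw [hw0, sub_zero] at hftc
    exact hftc ▸ integral_pos hb hWc (fun t _ => Real.sqrt_nonneg _)
      ⟨s₀, hs₀, hq₀.trans_le (hqW s₀)⟩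
  refine ⟨fun t => w t / w b, fun t => W t / w b, w b, hc,
    ⟨fun t ht => (hw t ht).div_const _, hWc.div_const _, by simp [hw0], div_self hc.ne',
      fun t ht =>
        ⟨div_nonneg (hw_nonneg t ht) hc.le, div_le_div_of_nonneg_right (hwW t) hc.le⟩⟩,
    fun t _ => ?_⟩
  rw [div_pow, div_pow, div_pow, ← sub_div, Real.sq_sqrt (by positivity), add_sub_cancel_left]

theorem exists_sq_sub_sq_pos {a b : ℝ} (hab : a ≤ b) {v v' : ℝ → ℝ}
    (hv : ∀ s ∈ Icc a b, HasDerivWithinAt v (v' s) (Icc a b) s) (hva : v a = 0) (hvb : v b ≠ 0)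
    (hvv' : ∀ s ∈ Icc a b, 0 ≤ v s ∧ v s ≤ v' s) : ∃ s ∈ Icc a b, 0 < v' s ^ 2 - v s ^ 2 := by
  by_contra! h
  have hv'v : ∀ s ∈ Icc a b, v' s = v s := fun s hs => by
    obtain ⟨h0, h1⟩ := hvv' s hs
    nlinarith [h s hs]
  exact hvb (eqOn_zero_of_hasDerivWithinAt_self (fun s hs => hv'v s hs ▸ hv s hs) hva
    (right_mem_Icc.2 hab))

/-- The paper's `K(v)` is `weightedRatio b (θ² - θ'²) m (v'² - v²)`. -/
noncomputable def weightedRatio (b : ℝ) (H m g : ℝ → ℝ) : ℝ≥0∞ :=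
  ENNReal.ofReal √(∫ s in (0 : ℝ)..b, g s * m s ^ 2) /
    ENNReal.ofReal (∫ s in (0 : ℝ)..b, √(H s) * √(g s))

section weightedRatio

variable {b : ℝ} {H m g : ℝ → ℝ}

theorem ofReal_inv_sqrt_le_weightedRatio (hb : 0 < b)
    (hH : ContinuousOn H (Icc 0 b)) (hH0 : ∀ s ∈ Icc 0 b, 0 ≤ H s)
    (hm : ContinuousOn m (Icc 0 b)) (hm0 : ∀ s ∈ Icc 0 b, m s ≠ 0)
    (hg : ContinuousOn g (Icc 0 b)) (hg0 : ∀ s ∈ Icc 0 b, 0 ≤ g s)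
    (hI : 0 < ∫ s in (0 : ℝ)..b, H s * (m s ^ 2)⁻¹) (hgpos : ∃ s ∈ Icc 0 b, 0 < g s) :
    ENNReal.ofReal (√(∫ s in (0 : ℝ)..b, H s * (m s ^ 2)⁻¹))⁻¹ ≤ weightedRatio b H m g := by
  obtain ⟨s₀, hs₀, hg₀⟩ := hgpos
  have hN : 0 < ∫ s in (0 : ℝ)..b, g s * m s ^ 2 :=
    integral_pos hb (hg.mul (hm.pow 2))
      (fun s hs => mul_nonneg (hg0 s (Ioc_subset_Icc_self hs)) (sq_nonneg _))
      ⟨s₀, hs₀, mul_pos hg₀ (sq_pos_of_ne_zero (hm0 s₀ hs₀))⟩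
  exact ENNReal.ofReal_inv_sqrt_le_div hI hN
    (integral_sqrt_mul_sqrt_le hb.le hH hH0 hm hm0 hg hg0)

theorem weightedRatio_eq_of_forall_eq_sq {c : ℝ} (hb : 0 ≤ b) (hc : 0 < c)
    (hH0 : ∀ s ∈ Icc 0 b, 0 ≤ H s) (hm0 : ∀ s ∈ Icc 0 b, m s ≠ 0)
    (hI : 0 < ∫ s in (0 : ℝ)..b, H s * (m s ^ 2)⁻¹)
    (hg : ∀ s ∈ Icc 0 b, g s = (√(H s) / m s ^ 2 / c) ^ 2) :
    weightedRatio b H m g = ENNReal.ofReal (√(∫ s in (0 : ℝ)..b, H s * (m s ^ 2)⁻¹))⁻¹ := by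
  set I := ∫ s in (0 : ℝ)..b, H s * (m s ^ 2)⁻¹
  have hu := uIcc_of_le hb
  have hN : ∫ s in (0 : ℝ)..b, g s * m s ^ 2 = I / c ^ 2 := by
    rw [← intervalIntegral.integral_div]
    refine integral_congr fun s hs => ?_
    rw [hu] at hs
    simp only [hg s hs, div_pow, Real.sq_sqrt (hH0 s hs)]
    field_simp [hm0 s hs]
  have hD : ∫ s in (0 : ℝ)..b, √(H s) * √(g s) = I / c := by
    rw [← intervalIntegral.integral_div]
    refine integral_congr fun s hs => ?_
    rw [hu] at hs
    simp only [hg s hs]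
    rw [Real.sqrt_sq (by positivity)]
    field_simp [hm0 s hs]
    exact Real.sq_sqrt (hH0 s hs)
  rw [weightedRatio, hN, hD, Real.sqrt_div' _ (sq_nonneg c), Real.sqrt_sq hc.le,
    ← ENNReal.ofReal_div_of_pos (div_pos hI hc)]
  congr 1
  field_simp
  exact Real.sq_sqrt hI.le

end weightedRatio

theorem stmt_16_general (b : ℝ) (hb : 0 < b) (m m' θ θ' : ℝ → ℝ)
    (hm : ∀ s ∈ Icc (0 : ℝ) b, HasDerivWithinAt m (m' s) (Icc 0 b) s)
    (hmpos : ∀ s ∈ Icc (0 : ℝ) b, 0 < m s)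
    (hθ : ∀ s ∈ Icc (0 : ℝ) b, HasDerivWithinAt θ (θ' s) (Icc 0 b) s)
    (hθ'c : ContinuousOn θ' (Icc 0 b))
    (hθbd : ∀ s ∈ Icc (0 : ℝ) b, |θ' s| ≤ θ s)
    (hne : ∃ s ∈ Icc (0 : ℝ) b, θ s ^ 2 - θ' s ^ 2 ≠ 0) :
    (⨅ v : {p : (ℝ → ℝ) × (ℝ → ℝ) //
        (∀ s ∈ Icc (0 : ℝ) b, HasDerivWithinAt p.1 (p.2 s) (Icc 0 b) s) ∧
        ContinuousOn p.2 (Icc 0 b) ∧ p.1 0 = 0 ∧ p.1 b = 1 ∧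
        (∀ s ∈ Icc (0 : ℝ) b, 0 ≤ p.1 s ∧ p.1 s ≤ p.2 s)},
      ENNReal.ofReal
          (Real.sqrt (∫ s in (0 : ℝ)..b, (v.1.2 s ^ 2 - v.1.1 s ^ 2) * m s ^ 2)) /
        ENNReal.ofReal
          (∫ s in (0 : ℝ)..b,
            Real.sqrt (θ s ^ 2 - θ' s ^ 2) * Real.sqrt (v.1.2 s ^ 2 - v.1.1 s ^ 2)))
    = ENNReal.ofReal
        ((Real.sqrt (∫ s in (0 : ℝ)..b, (θ s ^ 2 - θ' s ^ 2) * (m s ^ 2)⁻¹))⁻¹) := by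
  have hmc : ContinuousOn m (Icc 0 b) := fun s hs => (hm s hs).continuousWithinAt
  have hm0 : ∀ s ∈ Icc (0 : ℝ) b, m s ≠ 0 := fun s hs => (hmpos s hs).ne'
  have hHc : ContinuousOn (fun s => θ s ^ 2 - θ' s ^ 2) (Icc 0 b) :=
    (ContinuousOn.pow (fun s hs => (hθ s hs).continuousWithinAt) 2).sub (hθ'c.pow 2)
  have hH0 : ∀ s ∈ Icc (0 : ℝ) b, 0 ≤ θ s ^ 2 - θ' s ^ 2 := fun s hs =>
    sub_nonneg.2 (sq_le_sq' (neg_le_of_abs_le (hθbd s hs)) (le_of_abs_le (hθbd s hs)))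
  obtain ⟨s₀, hs₀, hH₀⟩ := hne
  replace hH₀ := (hH0 s₀ hs₀).lt_of_ne' hH₀
  have hI : 0 < ∫ s in (0 : ℝ)..b, (θ s ^ 2 - θ' s ^ 2) * (m s ^ 2)⁻¹ :=
    integral_pos hb (hHc.mul ((hmc.pow 2).inv₀ fun s hs => pow_ne_zero 2 (hm0 s hs)))
      (fun s hs => mul_nonneg (hH0 s (Ioc_subset_Icc_self hs)) (inv_nonneg.2 (sq_nonneg _)))
      ⟨s₀, hs₀, mul_pos hH₀ (inv_pos.2 (pow_pos (hmpos s₀ hs₀) 2))⟩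
  refine le_antisymm ?_ (le_iInf fun ⟨⟨v, v'⟩, hv, hv'c, hv0, hvb, hvv'⟩ => ?_)
  · obtain ⟨v, v', c, hc, hadm, hvv'⟩ := exists_sq_sub_sq_eq_sq hb
      (q := fun s => √(θ s ^ 2 - θ' s ^ 2) / m s ^ 2)
      ((Real.continuous_sqrt.comp_continuousOn hHc).div (hmc.pow 2)
        fun s hs => pow_ne_zero 2 (hm0 s hs))
      ⟨s₀, hs₀, div_pos (Real.sqrt_pos.2 hH₀) (pow_pos (hmpos s₀ hs₀) 2)⟩
    exact iInf_le_of_le ⟨(v, v'), hadm⟩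
      (weightedRatio_eq_of_forall_eq_sq hb.le hc hH0 hm0 hI hvv').le
  · have hvc : ContinuousOn v (Icc 0 b) := fun s hs => (hv s hs).continuousWithinAt
    exact ofReal_inv_sqrt_le_weightedRatio hb hHc hH0 hmc hm0 ((hv'c.pow 2).sub (hvc.pow 2))
      (fun s hs => sub_nonneg.2 (pow_le_pow_left₀ (hvv' s hs).1 (hvv' s hs).2 2)) hI
      (exists_sq_sub_sq_pos hb.le hv hv0 (ne_of_eq_of_ne hvb one_ne_zero) hvv')

theorem stmt_16 (b : ℝ) (hb : 0 < b) (m m' θ θ' : ℝ → ℝ)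
    (hm : ∀ s ∈ Icc (0 : ℝ) b, HasDerivWithinAt m (m' s) (Icc 0 b) s)
    (hm'c : ContinuousOn m' (Icc 0 b))
    (hmpos : ∀ s ∈ Icc (0 : ℝ) b, 0 < m s)
    (hθ : ∀ s ∈ Icc (0 : ℝ) b, HasDerivWithinAt θ (θ' s) (Icc 0 b) s)
    (hθ'c : ContinuousOn θ' (Icc 0 b))
    (hθbd : ∀ s ∈ Icc (0 : ℝ) b, |θ' s| ≤ θ s)
    (hθb : θ b = 1)
    (hne : ∃ s ∈ Icc (0 : ℝ) b, θ s ^ 2 - θ' s ^ 2 ≠ 0) :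
    (⨅ v : {p : (ℝ → ℝ) × (ℝ → ℝ) //
        (∀ s ∈ Icc (0 : ℝ) b, HasDerivWithinAt p.1 (p.2 s) (Icc 0 b) s) ∧
        ContinuousOn p.2 (Icc 0 b) ∧ p.1 0 = 0 ∧ p.1 b = 1 ∧
        (∀ s ∈ Icc (0 : ℝ) b, 0 ≤ p.1 s ∧ p.1 s ≤ p.2 s)},
      ENNReal.ofReal
          (Real.sqrt (∫ s in (0 : ℝ)..b, (v.1.2 s ^ 2 - v.1.1 s ^ 2) * m s ^ 2)) /
        ENNReal.ofReal
          (∫ s in (0 : ℝ)..b,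
            Real.sqrt (θ s ^ 2 - θ' s ^ 2) * Real.sqrt (v.1.2 s ^ 2 - v.1.1 s ^ 2)))
    = ENNReal.ofReal
        ((Real.sqrt (∫ s in (0 : ℝ)..b, (θ s ^ 2 - θ' s ^ 2) * (m s ^ 2)⁻¹))⁻¹) :=
  stmt_16_general b hb m m' θ θ' hm hmpos hθ hθ'c hθbd hne
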